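/- arXiv:2412.16722 — 5 statements merged into one kernel-verified Lean document; each statement's English description precedes it below -/
import Mathlib

section
/- Let F be a finite field and n ≥ 2. The group UT(n, F) of upper unitriangular n×n matrices over F is generated by its normal Abelian subgroups. -/
namespace Stmt2Aux

variable {F : Type*} [Field F] {n : ℕ}

/-- Entries outside the top-right block `{(i,j) | i ≤ k < j}` (and off the diagonal) vanish. -/
def blk (k : ℕ) (A : Matrix (Fin n) (Fin n) F) : Prop :=
  ∀ i j : Fin n, ¬((i : ℕ) ≤ k ∧ k < (j : ℕ)) → i ≠ j → A i j = 0

theorem blk_one (k : ℕ) : blk k (1 : Matrix (Fin n) (Fin n) F) := by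
  intro i j _ hij
  simp [Matrix.one_apply, hij]

theorem blk_mul {k : ℕ} {A B : Matrix (Fin n) (Fin n) F} (hA : blk k A) (hB : blk k B) :
    blk k (A * B) := by
  intro i j hblk hij
  rw [Matrix.mul_apply]
  apply Finset.sum_eq_zero
  intro l _
  by_cases hli : l = i
  · subst hli; rw [hB _ _ hblk hij, mul_zero]
  by_cases hlj : l = j
  · subst hlj; rw [hA _ _ hblk hij, zero_mul]
  by_cases hAil : A i l = 0
  · rw [hAil, zero_mul]
  · have h1 : (i : ℕ) ≤ k ∧ k < (l : ℕ) := by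
      by_contra h; exact hAil (hA i l h (Ne.symm hli))
    have h2 : B l j = 0 := hB l j (by omega) hlj
    rw [h2, mul_zero]

/-- If `A` has unit diagonal and block support off-diagonal, then `A - 1` is block supported. -/
theorem sub_one_supp {k : ℕ} {A : Matrix (Fin n) (Fin n) F}
    (hA1 : ∀ i, A i i = 1) (hb : blk k A) :
    ∀ i j : Fin n, ¬((i : ℕ) ≤ k ∧ k < (j : ℕ)) → (A - 1) i j = 0 := by
  intro i j h
  by_cases hij : i = j
  · subst hij; simp [hA1]
  · simp [Matrix.one_apply, hij, hb i j h hij]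

theorem supp_mul_supp {k : ℕ} {B C : Matrix (Fin n) (Fin n) F}
    (hB : ∀ i j : Fin n, ¬((i : ℕ) ≤ k ∧ k < (j : ℕ)) → B i j = 0)
    (hC : ∀ i j : Fin n, ¬((i : ℕ) ≤ k ∧ k < (j : ℕ)) → C i j = 0) :
    B * C = 0 := by
  ext i j
  rw [Matrix.mul_apply]
  simp only [Matrix.zero_apply]
  apply Finset.sum_eq_zero
  intro l _
  by_cases hBil : B i l = 0
  · rw [hBil, zero_mul]
  · have h1 : (i : ℕ) ≤ k ∧ k < (l : ℕ) := by by_contra h; exact hBil (hB i l h)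
    rw [hC l j (by omega), mul_zero]

theorem blk_comm {k : ℕ} {A B : Matrix (Fin n) (Fin n) F}
    (hA1 : ∀ i, A i i = 1) (hbA : blk k A)
    (hB1 : ∀ i, B i i = 1) (hbB : blk k B) : A * B = B * A := by
  have h1 : (A - 1) * (B - 1) = 0 :=
    supp_mul_supp (sub_one_supp hA1 hbA) (sub_one_supp hB1 hbB)
  have h2 : (B - 1) * (A - 1) = 0 :=
    supp_mul_supp (sub_one_supp hB1 hbB) (sub_one_supp hA1 hbA)
  have e1 : A * B = A + B - 1 + (A - 1) * (B - 1) := by noncomm_ring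
  have e2 : B * A = A + B - 1 + (B - 1) * (A - 1) := by noncomm_ring
  rw [e1, e2, h1, h2]

theorem blk_inv_eq {k : ℕ} {A : Matrix (Fin n) (Fin n) F}
    (hA1 : ∀ i, A i i = 1) (hbA : blk k A) :
    A * (1 - (A - 1)) = 1 := by
  have h1 : (A - 1) * (A - 1) = 0 :=
    supp_mul_supp (sub_one_supp hA1 hbA) (sub_one_supp hA1 hbA)
  have : A * (1 - (A - 1)) = 1 - (A - 1) * (A - 1) := by noncomm_ring
  rw [this, h1, sub_zero]

theorem blk_of_inv {k : ℕ} {A : Matrix (Fin n) (Fin n) F}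
    (hA1 : ∀ i, A i i = 1) (hbA : blk k A) : blk k (1 - (A - 1)) := by
  intro i j h hij
  have h0 := sub_one_supp hA1 hbA i j h
  simp only [Matrix.sub_apply, Matrix.one_apply, if_neg hij, sub_zero] at h0 ⊢
  simp [h0]

/-- Conjugation by unitriangular matrices preserves block support. -/
theorem blk_conj {k : ℕ} {g gi A : Matrix (Fin n) (Fin n) F}
    (hg : ∀ i j : Fin n, j < i → g i j = 0)
    (hgi : ∀ i j : Fin n, j < i → gi i j = 0)
    (hggi : g * gi = 1)
    (hA1 : ∀ i, A i i = 1) (hbA : blk k A) : blk k (g * A * gi) := by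
  have hB := sub_one_supp hA1 hbA
  have hgB : ∀ i j : Fin n, ¬((i : ℕ) ≤ k ∧ k < (j : ℕ)) → (g * (A - 1)) i j = 0 := by
    intro i j h
    rw [Matrix.mul_apply]
    apply Finset.sum_eq_zero
    intro l _
    by_cases hli : l < i
    · rw [hg i l hli, zero_mul]
    · have hil : (i : ℕ) ≤ (l : ℕ) := by
        have := Fin.lt_def.not.mp hli; omega
      rw [hB l j (by omega), mul_zero]
  have hgBgi : ∀ i j : Fin n, ¬((i : ℕ) ≤ k ∧ k < (j : ℕ)) → (g * (A - 1) * gi) i j = 0 := by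
    intro i j h
    rw [Matrix.mul_apply]
    apply Finset.sum_eq_zero
    intro l _
    by_cases hjl : j < l
    · rw [hgi l j hjl, mul_zero]
    · have hlj : (l : ℕ) ≤ (j : ℕ) := by
        have := Fin.lt_def.not.mp hjl; omega
      rw [hgB i l (by omega), zero_mul]
  have key : g * A * gi = 1 + g * (A - 1) * gi := by
    have : g * A * gi = g * gi + g * (A - 1) * gi := by noncomm_ring
    rw [this, hggi]
  intro i j h hij
  rw [key]
  simp only [Matrix.add_apply, Matrix.one_apply, if_neg hij, hgBgi i j h, add_zero]

end Stmt2Aux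

namespace Stmt2Aux

variable {F : Type*} [Field F] {n : ℕ}
variable (UT : Subgroup (Matrix (Fin n) (Fin n) F)ˣ)

/-- The normal abelian block subgroup at level `k`. -/
def Hk (hUT : ∀ M : (Matrix (Fin n) (Fin n) F)ˣ,
      M ∈ UT ↔ (∀ i : Fin n, M.val i i = 1) ∧ ∀ i j : Fin n, j < i → M.val i j = 0)
    (k : ℕ) : Subgroup UT where
  carrier := {x | blk k (((x : (Matrix (Fin n) (Fin n) F)ˣ) : Matrix (Fin n) (Fin n) F))}
  one_mem' := blk_one k
  mul_mem' := fun ha hb => blk_mul ha hb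
  inv_mem' := by
    intro x hx
    have hx1 : ∀ i : Fin n, ((x : (Matrix (Fin n) (Fin n) F)ˣ) : Matrix (Fin n) (Fin n) F) i i = 1 :=
      ((hUT x.1).mp x.2).1
    have hinv : (((x : (Matrix (Fin n) (Fin n) F)ˣ)⁻¹ : (Matrix (Fin n) (Fin n) F)ˣ) : Matrix (Fin n) (Fin n) F)
        = 1 - (((x : (Matrix (Fin n) (Fin n) F)ˣ) : Matrix (Fin n) (Fin n) F) - 1) :=
      Units.inv_eq_of_mul_eq_one_right (blk_inv_eq hx1 hx)
    show blk k _
    rw [show (((x⁻¹ : UT) : (Matrix (Fin n) (Fin n) F)ˣ) : Matrix (Fin n) (Fin n) F)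
        = (((x : (Matrix (Fin n) (Fin n) F)ˣ)⁻¹ : (Matrix (Fin n) (Fin n) F)ˣ) : Matrix (Fin n) (Fin n) F) from rfl,
      hinv]
    exact blk_of_inv hx1 hx

theorem Hk_normal (hUT : ∀ M : (Matrix (Fin n) (Fin n) F)ˣ,
      M ∈ UT ↔ (∀ i : Fin n, M.val i i = 1) ∧ ∀ i j : Fin n, j < i → M.val i j = 0)
    (k : ℕ) : (Hk UT hUT k).Normal := by
  constructor
  intro x hx g
  have hxd := (hUT x.1).mp x.2
  have hgd := (hUT g.1).mp g.2
  have hgid := (hUT (g.1⁻¹)).mp (inv_mem g.2)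
  show blk k _
  have : (((g * x * g⁻¹ : UT) : (Matrix (Fin n) (Fin n) F)ˣ) : Matrix (Fin n) (Fin n) F)
      = ((g : (Matrix (Fin n) (Fin n) F)ˣ) : Matrix (Fin n) (Fin n) F)
        * ((x : (Matrix (Fin n) (Fin n) F)ˣ) : Matrix (Fin n) (Fin n) F)
        * (((g : (Matrix (Fin n) (Fin n) F)ˣ)⁻¹ : (Matrix (Fin n) (Fin n) F)ˣ) : Matrix (Fin n) (Fin n) F) := rfl
  rw [this]
  exact blk_conj hgd.2 hgid.2 (Units.mul_inv _) hxd.1 hx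

theorem Hk_comm (hUT : ∀ M : (Matrix (Fin n) (Fin n) F)ˣ,
      M ∈ UT ↔ (∀ i : Fin n, M.val i i = 1) ∧ ∀ i j : Fin n, j < i → M.val i j = 0)
    (k : ℕ) : ∀ a b : Hk UT hUT k, a * b = b * a := by
  intro a b
  have had := (hUT a.1.1).mp a.1.2
  have hbd := (hUT b.1.1).mp b.1.2
  apply Subtype.ext; apply Subtype.ext; apply Units.ext
  exact blk_comm had.1 a.2 hbd.1 b.2

end Stmt2Aux

/-- For a finite field `F` and `n ≥ 2`, the group `UT(n, F)` of upper unitriangular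
`n × n` matrices over `F` is generated by its normal Abelian subgroups. -/
theorem stmt2 (F : Type*) [Field F] [Finite F] (n : ℕ) (hn : 2 ≤ n)
    (UT : Subgroup (Matrix (Fin n) (Fin n) F)ˣ)
    (hUT : ∀ M : (Matrix (Fin n) (Fin n) F)ˣ,
      M ∈ UT ↔ (∀ i : Fin n, M.val i i = 1) ∧ ∀ i j : Fin n, j < i → M.val i j = 0) :
    Subgroup.closure
      (⋃ H ∈ {H : Subgroup UT | H.Normal ∧ ∀ a b : H, a * b = b * a}, (H : Set UT)) = ⊤ := by
  rw [eq_top_iff]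
  set S : Set UT :=
    ⋃ H ∈ {H : Subgroup UT | H.Normal ∧ ∀ a b : H, a * b = b * a}, (H : Set UT) with hS
  suffices key : ∀ m : ℕ, ∀ x : UT,
      (∀ i j : Fin n, i ≠ j → m ≤ (j : ℕ) →
        ((x : (Matrix (Fin n) (Fin n) F)ˣ) : Matrix (Fin n) (Fin n) F) i j = 0) →
      x ∈ Subgroup.closure S by
    intro x _
    exact key n x (fun i j _ hj => absurd hj (by have := j.isLt; omega))
  intro m
  induction m with
  | zero =>
    intro x hx
    have hxd := (hUT x.1).mp x.2
    have hx1 : x = 1 := by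
      apply Subtype.ext; apply Units.ext
      ext i j
      by_cases hij : i = j
      · subst hij; simp [hxd.1 i, Matrix.one_apply_eq]
      · simp [hx i j hij (Nat.zero_le _), Matrix.one_apply_ne, hij]
    rw [hx1]; exact one_mem _
  | succ m ih =>
    intro x hx
    by_cases hm : m < n
    · set X : Matrix (Fin n) (Fin n) F :=
        ((x : (Matrix (Fin n) (Fin n) F)ˣ) : Matrix (Fin n) (Fin n) F) with hX
      have hxd := (hUT x.1).mp x.2
      set jm : Fin n := ⟨m, hm⟩ with hjm
      set C : Matrix (Fin n) (Fin n) F :=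
        Matrix.of (fun i j => if j = jm ∧ i ≠ jm then X i j else 0) with hC
      have hC0 : ∀ i j : Fin n, ¬(j = jm ∧ i ≠ jm) → C i j = 0 := by
        intro i j h; simp only [hC, Matrix.of_apply, if_neg h]
      have hCsupp : ∀ i j : Fin n, C i j ≠ 0 → (i : ℕ) < m ∧ j = jm := by
        intro i j h
        have hcond : j = jm ∧ i ≠ jm := by
          by_contra hc; exact h (hC0 i j hc)
        obtain ⟨rfl, hi⟩ := hcond
        refine ⟨?_, rfl⟩
        by_contra hge
        have hine : (i : ℕ) ≠ m := by
          intro hc; exact hi (Fin.ext (by simpa [hjm] using hc))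
        have him : jm < i := by
          rw [Fin.lt_def]; simp only [hjm]; omega
        have hCval : C i jm = X i jm := by
          simp [hC, hi]
        have : X i jm = 0 := hxd.2 i jm him
        rw [hCval, this] at h
        exact h rfl
      have hCC : C * C = 0 := by
        ext i j
        rw [Matrix.mul_apply]
        simp only [Matrix.zero_apply]
        apply Finset.sum_eq_zero
        intro l _
        by_cases hCil : C i l = 0
        · rw [hCil, zero_mul]
        · have hl := (hCsupp i l hCil).2
          have : C l j = 0 := hC0 l j (by intro hcon; exact hcon.2 hl)
          rw [this, mul_zero]
      have h1 : (1 + C) * (1 - C) = 1 := by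
        have : (1 + C) * (1 - C) = 1 - C * C := by noncomm_ring
        rw [this, hCC, sub_zero]
      have h2 : (1 - C) * (1 + C) = 1 := by
        have : (1 - C) * (1 + C) = 1 - C * C := by noncomm_ring
        rw [this, hCC, sub_zero]
      set z₀ : (Matrix (Fin n) (Fin n) F)ˣ := ⟨1 + C, 1 - C, h1, h2⟩ with hz₀
      have hz₀UT : z₀ ∈ UT := by
        rw [hUT]
        constructor
        · intro i
          have : C i i = 0 := hC0 i i (by intro hcon; exact hcon.2 hcon.1)
          simp [hz₀, this, Matrix.one_apply_eq]
        · intro i j hji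
          have hCij : C i j = 0 := by
            by_contra h
            obtain ⟨h1', h2'⟩ := hCsupp i j h
            have := Fin.lt_def.mp hji
            rw [h2'] at hji
            have : (jm : ℕ) < (i : ℕ) := Fin.lt_def.mp hji
            simp only [hjm] at this
            omega
          have hij : i ≠ j := by
            intro hcon; subst hcon; exact lt_irrefl _ hji
          show ((1 + C) : Matrix (Fin n) (Fin n) F) i j = 0
          simp [Matrix.add_apply, Matrix.one_apply_ne hij, hCij]
      set z : UT := ⟨z₀, hz₀UT⟩ with hz
      have hzblk : z ∈ Stmt2Aux.Hk UT hUT (m - 1) := by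
        show Stmt2Aux.blk (m - 1) _
        intro i j h hij
        show ((1 + C) : Matrix (Fin n) (Fin n) F) i j = 0
        have hCij : C i j = 0 := by
          by_contra hne
          obtain ⟨hi, hj⟩ := hCsupp i j hne
          have : (j : ℕ) = m := by rw [hj]
          omega
        simp [Matrix.add_apply, Matrix.one_apply, hij, hCij]
      have hzmem : z ∈ Subgroup.closure S := by
        apply Subgroup.subset_closure
        exact Set.mem_biUnion ⟨Stmt2Aux.Hk_normal UT hUT (m - 1), Stmt2Aux.Hk_comm UT hUT (m - 1)⟩ hzblk
      have hyval : (((z⁻¹ * x : UT) : (Matrix (Fin n) (Fin n) F)ˣ) : Matrix (Fin n) (Fin n) F)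
          = (1 - C) * X := rfl
      have hy : ∀ i j : Fin n, i ≠ j → m ≤ (j : ℕ) →
          (((z⁻¹ * x : UT) : (Matrix (Fin n) (Fin n) F)ˣ) : Matrix (Fin n) (Fin n) F) i j = 0 := by
        intro i j hij hj
        rw [hyval]
        have hCX : (C * X) i j = C i jm * X jm j := by
          rw [Matrix.mul_apply]
          apply Finset.sum_eq_single_of_mem jm (Finset.mem_univ _)
          intro l _ hl
          rw [hC0 i l (by intro hcon; exact hl hcon.1), zero_mul]
        have hentry : ((1 - C) * X) i j = X i j - (C * X) i j := by
          simp [Matrix.sub_mul]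
        rw [hentry, hCX]
        by_cases hjjm : j = jm
        · subst hjjm
          have hinejm : i ≠ jm := hij
          have hXd : X jm jm = 1 := hxd.1 jm
          rw [hXd, mul_one]
          have : C i jm = X i jm := by
            simp [hC, hinejm]
          rw [this, sub_self]
        · have hjgt : m + 1 ≤ (j : ℕ) := by
            have : (j : ℕ) ≠ m := fun hcon => hjjm (Fin.ext hcon)
            omega
          rw [hx i j hij hjgt, hx jm j (by intro hcon; exact hjjm hcon.symm) hjgt, mul_zero,
            sub_zero]
      have hfin : x = z * (z⁻¹ * x) := by group
      rw [hfin]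
      exact mul_mem hzmem (ih (z⁻¹ * x) hy)
    · exact ih x (fun i j hij hj => hx i j hij (by have := j.isLt; omega))
end

section
/- Let A be a finite Abelian group and let q: A → kˣ be a quadratic form with values in the multiplicative group of a field of characteristic 0. If A is generated by its isotropic elements (elements x with q(x) = 1) and n is the exponent of A, then q(x)^n = 1 for every x ∈ A. -/
/-- The bilinear form associated to a quadratic form `q : A → kˣ`. -/
def Bform {A k : Type*} [AddCommGroup A] [Field k] (q : A → kˣ) (x y : A) : kˣ :=
  q (x + y) * (q x * q y)⁻¹

/-- `q : A → kˣ` is a quadratic form: `q(-x) = q(x)` and its associated form is bilinear. -/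
def IsQuadraticForm {A k : Type*} [AddCommGroup A] [Field k] (q : A → kˣ) : Prop :=
  (∀ x, q (-x) = q x) ∧ ∀ x y z, Bform q (x + y) z = Bform q x z * Bform q y z

/-- Non-degeneracy of the bilinear form associated to `q`. -/
def Nondeg {A k : Type*} [AddCommGroup A] [Field k] (q : A → kˣ) : Prop :=
  ∀ x, (∀ y, Bform q x y = 1) → x = 0

/-- If a finite Abelian pre-metric group `(A, q)` is generated by its isotropic
elements and `n` is the exponent of `A`, then `q(x)^n = 1` for all `x`. -/
theorem stmt3 {k : Type*} [Field k] [CharZero k]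
    {A : Type*} [AddCommGroup A] [Finite A] (q : A → kˣ)
    (hq : IsQuadraticForm q)
    (hgen : AddSubgroup.closure {x : A | q x = 1} = ⊤) :
    ∀ x : A, q x ^ AddMonoid.exponent A = 1 := by
  obtain ⟨hneg, hbil⟩ := hq
  set n := AddMonoid.exponent A with hn
  -- B(0, y) = 1
  have hB0 : ∀ y : A, Bform q 0 y = 1 := by
    intro y
    have h := hbil 0 0 y
    rw [add_zero] at h
    have := mul_left_cancel₀ (Units.ne_zero _)
      (by rw [← Units.val_mul, ← h, mul_one] : (Bform q 0 y : k) * (Bform q 0 y : k)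
        = (Bform q 0 y : k) * 1)
    exact Units.ext this
  -- B(m • x, y) = B(x,y)^m
  have hBsmul : ∀ (m : ℕ) (x y : A), Bform q (m • x) y = Bform q x y ^ m := by
    intro m x y
    induction m with
    | zero => simpa using hB0 y
    | succ m ih =>
      rw [succ_nsmul, hbil, ih, pow_succ]
  -- B(x,y)^n = 1
  have hBn : ∀ x y : A, Bform q x y ^ n = 1 := by
    intro x y
    rw [← hBsmul, hn, AddMonoid.exponent_nsmul_eq_zero, hB0]
  -- q 0 = 1
  have hq0 : q 0 = 1 := by
    have h := hB0 0
    unfold Bform at h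
    rw [add_zero] at h
    have : q 0 * (q 0 * q 0)⁻¹ = (q 0)⁻¹ := by
      rw [mul_inv, ← mul_assoc, mul_inv_cancel, one_mul]
    rw [this] at h
    exact (inv_eq_one.mp h)
  -- The set {x | q x ^ n = 1} is a subgroup
  let S : AddSubgroup A :=
    { carrier := {x : A | q x ^ n = 1}
      zero_mem' := by simp [hq0]
      add_mem' := by
        intro a b ha hb
        have key : q (a + b) = q a * q b * Bform q a b := by
          unfold Bform
          rw [mul_comm (q a * q b), mul_assoc, inv_mul_cancel, mul_one]
        show q (a + b) ^ n = 1
        rw [key, mul_pow, mul_pow, ha, hb, hBn, one_mul, one_mul]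
      neg_mem' := by
        intro a ha
        show q (-a) ^ n = 1
        rw [hneg]; exact ha }
  have hsub : AddSubgroup.closure {x : A | q x = 1} ≤ S := by
    apply AddSubgroup.closure_le S |>.mpr
    intro x hx
    show q x ^ n = 1
    rw [hx, one_pow]
  intro x
  have : x ∈ S := hsub (hgen ▸ AddSubgroup.mem_top x)
  exact this
end

section
/- Let (A, q) be a metric group (a finite Abelian group with a non-degenerate quadratic form q: A → kˣ) of exponent n that is generated by its isotropic elements. Then A contains an isotropic element of order exactly n. -/
/-!
For a prime `p ∣ n`, the isotropic elements cannot all have order dividing `n / p`, since they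
generate `A`; so some isotropic `x` has order divisible by `p ^ vₚ(n)`, and a suitable multiple
of `x` is isotropic of order exactly `p ^ vₚ(n)`. If `x` and `y` have coprime orders then
`B(x, y)` is killed by both orders, so `q (x + y) = q x * q y`. Summing the isotropic elements
found for the primes dividing `n` therefore gives an isotropic element of order `n`.
-/

open Function

section Bform

variable {A k : Type*} [AddCommGroup A] [Field k] {q : A → kˣ}

lemma Bform_comm (q : A → kˣ) (x y : A) : Bform q x y = Bform q y x := by
  simp only [Bform, add_comm, mul_comm]

lemma Bform_mul_mul (q : A → kˣ) (x y : A) : Bform q x y * (q x * q y) = q (x + y) :=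
  inv_mul_cancel_right _ _

namespace IsQuadraticForm

variable (hq : IsQuadraticForm q)
include hq

lemma Bform_zero_left (z : A) : Bform q 0 z = 1 := by
  have h := hq.2 0 0 z
  rw [add_zero] at h
  exact mul_eq_right.mp h.symm

lemma map_zero : q 0 = 1 := by
  have h := hq.Bform_zero_left 0
  rw [Bform, add_zero, mul_inv_eq_one] at h
  exact mul_eq_left.mp h.symm

lemma Bform_nsmul_left (m : ℕ) (x z : A) : Bform q (m • x) z = Bform q x z ^ m := by
  induction m with
  | zero => rw [zero_smul, pow_zero, hq.Bform_zero_left]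
  | succ m ih => rw [succ_nsmul, hq.2, ih, pow_succ]

lemma Bform_neg_left (x z : A) : Bform q (-x) z = (Bform q x z)⁻¹ := by
  have h := hq.2 x (-x) z
  rw [add_neg_cancel, hq.Bform_zero_left] at h
  exact eq_inv_of_mul_eq_one_right h.symm

lemma Bform_self (x : A) : Bform q x x = q x ^ 2 := by
  have h : Bform q (-x) x = (q x * q x)⁻¹ := by
    rw [Bform, neg_add_cancel, hq.map_zero, hq.1 x, one_mul]
  rw [hq.Bform_neg_left, inv_inj] at h
  rw [h, sq]

lemma map_nsmul (m : ℕ) (x : A) : q (m • x) = q x ^ (m ^ 2) := by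
  induction m with
  | zero => rw [zero_smul, hq.map_zero, zero_pow two_ne_zero, pow_zero]
  | succ m ih =>
    rw [succ_nsmul, ← Bform_mul_mul q, ih, hq.Bform_nsmul_left, hq.Bform_self, ← pow_mul,
      ← pow_succ, ← pow_add]
    congr 1
    ring

lemma Bform_eq_one_of_coprime {x y : A} (h : (addOrderOf x).Coprime (addOrderOf y)) :
    Bform q x y = 1 := by
  have hx : Bform q x y ^ addOrderOf x = 1 := by
    rw [← hq.Bform_nsmul_left, addOrderOf_nsmul_eq_zero, hq.Bform_zero_left]
  have hy : Bform q x y ^ addOrderOf y = 1 := by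
    rw [Bform_comm, ← hq.Bform_nsmul_left, addOrderOf_nsmul_eq_zero, hq.Bform_zero_left]
  simpa [h] using pow_gcd_eq_one.2 ⟨hx, hy⟩

lemma map_add_of_coprime {x y : A} (h : (addOrderOf x).Coprime (addOrderOf y)) :
    q (x + y) = q x * q y := by
  rw [← Bform_mul_mul q, hq.Bform_eq_one_of_coprime h, one_mul]

end IsQuadraticForm

end Bform

lemma Nat.ordProj_dvd_of_dvd_of_not_dvd_div {p n d : ℕ} (hp : p.Prime) (hdn : d ∣ n)
    (hd : ¬d ∣ n / p) : p ^ n.factorization p ∣ d := by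
  obtain ⟨e, rfl⟩ := hdn
  have hpe : ¬p ∣ e := by
    rintro ⟨f, rfl⟩
    exact hd ⟨f, by rw [Nat.mul_left_comm, Nat.mul_div_cancel_left _ hp.pos]⟩
  exact (Nat.Coprime.pow_left _ (hp.coprime_iff_not_dvd.2 hpe)).dvd_of_dvd_mul_right
    (Nat.ordProj_dvd _ _)

section Generation

variable {A : Type*} [AddCommGroup A]

lemma exponent_dvd_of_closure_eq_top {S : Set A} (hS : AddSubgroup.closure S = ⊤) {m : ℕ}
    (hm : ∀ x ∈ S, m • x = 0) : AddMonoid.exponent A ∣ m := by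
  have hker : AddSubgroup.closure S ≤ (nsmulAddMonoidHom m : A →+ A).ker :=
    (AddSubgroup.closure_le _).2 hm
  exact AddMonoid.exponent_dvd_of_forall_nsmul_eq_zero fun x ↦ hker (hS ▸ AddSubgroup.mem_top x)

lemma exists_mem_ordProj_exponent_dvd_addOrderOf (hA : AddMonoid.exponent A ≠ 0) {S : Set A}
    (hS : AddSubgroup.closure S = ⊤) {p : ℕ} (hp : p.Prime) (hpA : p ∣ AddMonoid.exponent A) :
    ∃ x ∈ S, p ^ (AddMonoid.exponent A).factorization p ∣ addOrderOf x := by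
  by_contra! h
  have hdvd : AddMonoid.exponent A ∣ AddMonoid.exponent A / p :=
    exponent_dvd_of_closure_eq_top hS fun x hx ↦ addOrderOf_dvd_iff_nsmul_eq_zero.1 <|
      by_contra fun hx' ↦ h x hx <|
        Nat.ordProj_dvd_of_dvd_of_not_dvd_div hp (AddMonoid.addOrder_dvd_exponent x) hx'
  have hpos : 0 < AddMonoid.exponent A / p := Nat.div_pos (Nat.le_of_dvd (by omega) hpA) hp.pos
  exact (Nat.le_of_dvd hpos hdvd).not_gt (Nat.div_lt_self (by omega) hp.one_lt)

lemma exists_mem_addOrderOf_eq_prod {S : Set A} (h0 : 0 ∈ S)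
    (hadd : ∀ x ∈ S, ∀ y ∈ S, (addOrderOf x).Coprime (addOrderOf y) → x + y ∈ S)
    {ι : Type*} {s : Finset ι} {f : ι → ℕ} (hf : (s : Set ι).Pairwise (Nat.Coprime on f))
    (hS : ∀ i ∈ s, ∃ x ∈ S, addOrderOf x = f i) : ∃ x ∈ S, addOrderOf x = ∏ i ∈ s, f i := by
  classical
  induction s using Finset.induction_on with
  | empty => exact ⟨0, h0, by simp⟩
  | insert i s hi ih =>
    obtain ⟨x, hxS, hx⟩ := hS i (Finset.mem_insert_self i s)
    obtain ⟨y, hyS, hy⟩ := ih (hf.mono (by simp)) fun j hj ↦ hS j (Finset.mem_insert_of_mem hj)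
    have hcop : (addOrderOf x).Coprime (addOrderOf y) := by
      rw [hx, hy]
      exact Nat.Coprime.prod_right fun j hj ↦
        hf (by simp) (by simp [hj]) (ne_of_mem_of_not_mem hj hi).symm
    refine ⟨x + y, hadd x hxS y hyS hcop, ?_⟩
    rw [(AddCommute.all x y).addOrderOf_add_eq_mul_addOrderOf_of_coprime hcop, hx, hy,
      Finset.prod_insert hi]

end Generation

theorem stmt4_general {k : Type*} [Field k]
    {A : Type*} [AddCommGroup A] [Finite A] (q : A → kˣ)
    (hq : IsQuadraticForm q)
    (hgen : AddSubgroup.closure {x : A | q x = 1} = ⊤) :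
    ∃ a : A, q a = 1 ∧ addOrderOf a = AddMonoid.exponent A := by
  set n := AddMonoid.exponent A
  have hn : n ≠ 0 := AddMonoid.exponent_ne_zero_of_finite
  have hprimary : ∀ p ∈ n.primeFactors,
      ∃ x ∈ {x : A | q x = 1}, addOrderOf x = p ^ n.factorization p := by
    intro p hp
    obtain ⟨x, hx, hdvd⟩ := exists_mem_ordProj_exponent_dvd_addOrderOf hn hgen
      (Nat.prime_of_mem_primeFactors hp) (Nat.dvd_of_mem_primeFactors hp)
    refine ⟨_, ?_, addOrderOf_nsmul_addOrderOf_sub (addOrderOf_pos x).ne' hdvd⟩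
    rw [Set.mem_ofPred_eq, hq.map_nsmul, hx, one_pow]
  have hcop : (n.primeFactors : Set ℕ).Pairwise (Nat.Coprime on fun p ↦ p ^ n.factorization p) :=
    fun p hp r hr hpr ↦ Nat.coprime_pow_primes _ _
      (Nat.prime_of_mem_primeFactors hp) (Nat.prime_of_mem_primeFactors hr) hpr
  have hadd : ∀ x ∈ {x : A | q x = 1}, ∀ y ∈ {x : A | q x = 1},
      (addOrderOf x).Coprime (addOrderOf y) → x + y ∈ {x : A | q x = 1} := by
    intro x hx y hy h
    rw [Set.mem_ofPred_eq, hq.map_add_of_coprime h, hx, hy, one_mul]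
  obtain ⟨a, ha, hord⟩ := exists_mem_addOrderOf_eq_prod hq.map_zero hadd hcop hprimary
  exact ⟨a, ha, hord.trans (Nat.prod_primeFactors_pow_factorization hn).symm⟩

/-- A metric group of exponent `n` generated by its isotropic elements contains an
isotropic element of order exactly `n`. -/
theorem stmt4 {k : Type*} [Field k] [CharZero k]
    {A : Type*} [AddCommGroup A] [Finite A] (q : A → kˣ)
    (hq : IsQuadraticForm q) (hnd : Nondeg q)
    (hgen : AddSubgroup.closure {x : A | q x = 1} = ⊤) :
    ∃ a : A, q a = 1 ∧ addOrderOf a = AddMonoid.exponent A :=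
  stmt4_general q hq hgen
end

section
/- Let p be an odd prime, m ≥ 1, and ζ, η primitive p^m-th roots of unity. The metric groups (Z/p^m Z, q_ζ) and (Z/p^m Z, q_η), with q_ζ(x) = ζ^{x²}, are isomorphic if and only if η = ζ^{a²} for some integer a relatively prime to p. -/
/-!
Every additive automorphism of `ZMod n` is multiplication by a unit `u`, and since `ζ ^ n = 1`
the exponent of `ζ` only matters modulo `n`. So `x ↦ u * x` carries `q_ζ` to `q_η` exactly when
`ζ = η ^ (u²)`, i.e. `η = ζ ^ (a²)` with `a` representing `u⁻¹`.
-/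

theorem ZMod.exists_unit_addEquiv_apply_eq_mul {n : ℕ} (e : ZMod n ≃+ ZMod n) :
    ∃ u : (ZMod n)ˣ, ∀ x, e x = u * x :=
  ⟨(AddAutEquivUnits n e).toMul, fun x => by
    conv_lhs => rw [← (AddAutEquivUnits n).symm_apply_apply e]
    rfl⟩

section

variable {G : Type*} [Monoid G] {n : ℕ} {ζ : G}

theorem pow_eq_pow_of_natCast_eq (hζ : ζ ^ n = 1) {a b : ℕ} (h : (a : ZMod n) = b) :
    ζ ^ a = ζ ^ b := by
  rw [pow_eq_pow_mod a hζ, pow_eq_pow_mod b hζ, (ZMod.natCast_eq_natCast_iff _ _ _).mp h]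

theorem exists_addEquiv_pow_val_sq_iff [NeZero n] {η : G} (hζ : ζ ^ n = 1) (hη : η ^ n = 1) :
    (∃ e : ZMod n ≃+ ZMod n, ∀ x, η ^ ((e x).val ^ 2) = ζ ^ (x.val ^ 2)) ↔
      ∃ a : ℕ, a.Coprime n ∧ η = ζ ^ (a ^ 2) := by
  constructor
  · rintro ⟨e, he⟩
    obtain ⟨u, hu⟩ := ZMod.exists_unit_addEquiv_apply_eq_mul e
    refine ⟨(u⁻¹ : (ZMod n)ˣ).val.val, ZMod.val_coe_unit_coprime _, ?_⟩
    rw [← he, hu, Units.mul_inv]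
    conv_lhs => rw [← pow_one η]
    exact pow_eq_pow_of_natCast_eq hη (by simp)
  · rintro ⟨a, ha, rfl⟩
    refine ⟨AddAut.mulLeft (ZMod.unitOfCoprime a ha)⁻¹, fun x => ?_⟩
    rw [← pow_mul]
    apply pow_eq_pow_of_natCast_eq hζ
    simp only [AddAut.mulLeft_apply_apply, Units.smul_def, smul_eq_mul, Nat.cast_mul, Nat.cast_pow,
      ZMod.natCast_zmod_val]
    rw [← mul_pow, ← mul_assoc, ← ZMod.coe_unitOfCoprime a ha, Units.mul_inv, one_mul]

end

theorem stmt11_general {k : Type*} [Field k]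
    (p m : ℕ) (hp : p.Prime) (hm : 1 ≤ m)
    (ζ η : kˣ) (hζ : IsPrimitiveRoot ζ (p ^ m)) (hη : IsPrimitiveRoot η (p ^ m)) :
    (∃ e : ZMod (p ^ m) ≃+ ZMod (p ^ m),
        ∀ x : ZMod (p ^ m), η ^ ((e x).val ^ 2) = ζ ^ (x.val ^ 2)) ↔
      ∃ a : ℕ, a.Coprime p ∧ η = ζ ^ (a ^ 2) := by
  have : NeZero (p ^ m) := ⟨pow_ne_zero m hp.ne_zero⟩
  simp only [exists_addEquiv_pow_val_sq_iff hζ.pow_eq_one hη.pow_eq_one,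
    Nat.coprime_pow_right_iff hm]

/-- For odd prime `p` and primitive `p^m`-th roots of unity `ζ, η`, the metric groups
`(ℤ/p^m, q_ζ)` and `(ℤ/p^m, q_η)` with `q_ζ(x) = ζ^{x²}` are isomorphic iff
`η = ζ^{a²}` for some `a` coprime to `p`. -/
theorem stmt11 {k : Type*} [Field k] [CharZero k]
    (p m : ℕ) (hp : p.Prime) (hodd : p ≠ 2) (hm : 1 ≤ m)
    (ζ η : kˣ) (hζ : IsPrimitiveRoot ζ (p ^ m)) (hη : IsPrimitiveRoot η (p ^ m)) :
    (∃ e : ZMod (p ^ m) ≃+ ZMod (p ^ m),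
        ∀ x : ZMod (p ^ m), η ^ ((e x).val ^ 2) = ζ ^ (x.val ^ 2)) ↔
      ∃ a : ℕ, a.Coprime p ∧ η = ζ ^ (a ^ 2) :=
  stmt11_general p m hp hm ζ η hζ hη
end

section
/- For any m ≥ 1 and ζ a primitive 2^m-th root of unity, the metric groups (Z/2^m Z × Z/2^m Z, h)^{⊕2} and (Z/2^m Z × Z/2^m Z, f)^{⊕2} are isomorphic, where h(x,y) = ζ^{xy} and f(x,y) = ζ^{x²+xy+y²}. -/
private lemma aux_root18 : ∀ n : ℕ, ∃ d : ℤ, (2:ℤ)^(n+1) ∣ d^2 + d + 4 := by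
  intro n
  induction n with
  | zero => exact ⟨0, by norm_num⟩
  | succ n ih =>
    obtain ⟨d, k, hk⟩ := ih
    rcases Int.even_or_odd k with ⟨j, hj⟩ | ⟨j, hj⟩
    · exact ⟨d, j, by linear_combination hk + (2:ℤ)^(n+1) * hj⟩
    · exact ⟨d + 2^(n+1), j + 1 + d + 2^n, by linear_combination hk + (2:ℤ)^(n+1) * hj⟩

/-- For `m ≥ 1` and `ζ` a primitive `2^m`-th root of unity, the metric groups
`(ℤ/2^m × ℤ/2^m, h)^{⊕2}` and `(ℤ/2^m × ℤ/2^m, f)^{⊕2}` are isomorphic, where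
`h(x,y) = ζ^{xy}` and `f(x,y) = ζ^{x²+xy+y²}`. -/
theorem stmt18 {k : Type*} [Field k] [CharZero k]
    (m : ℕ) (hm : 1 ≤ m) (ζ : kˣ) (hζ : IsPrimitiveRoot ζ (2 ^ m)) :
    ∃ e : (ZMod (2 ^ m) × ZMod (2 ^ m)) × (ZMod (2 ^ m) × ZMod (2 ^ m)) ≃+
        (ZMod (2 ^ m) × ZMod (2 ^ m)) × (ZMod (2 ^ m) × ZMod (2 ^ m)),
      ∀ v : (ZMod (2 ^ m) × ZMod (2 ^ m)) × (ZMod (2 ^ m) × ZMod (2 ^ m)),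
        ζ ^ ((e v).1.1.val ^ 2 + (e v).1.1.val * (e v).1.2.val + (e v).1.2.val ^ 2) *
            ζ ^ ((e v).2.1.val ^ 2 + (e v).2.1.val * (e v).2.2.val + (e v).2.2.val ^ 2) =
          ζ ^ (v.1.1.val * v.1.2.val) * ζ ^ (v.2.1.val * v.2.2.val) := by
  haveI : NeZero (2 ^ m) := ⟨pow_ne_zero m two_ne_zero⟩
  -- a root of d² + d + 4 ≡ 0 mod 2^m
  obtain ⟨d₀, hd₀⟩ : ∃ d : ℤ, (2:ℤ)^m ∣ d^2 + d + 4 := by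
    obtain ⟨d, hd⟩ := aux_root18 (m - 1)
    exact ⟨d, by rwa [Nat.sub_add_cancel hm] at hd⟩
  set d : ZMod (2 ^ m) := (d₀ : ZMod (2 ^ m)) with hd_def
  have h1 : d ^ 2 + d + 4 = 0 := by
    have : ((d₀ ^ 2 + d₀ + 4 : ℤ) : ZMod (2 ^ m)) = 0 := by
      rw [ZMod.intCast_zmod_eq_zero_iff_dvd]
      exact_mod_cast hd₀
    push_cast at this
    linear_combination this
  -- the inverse of 3
  set t : ZMod (2 ^ m) := (3 : ZMod (2 ^ m))⁻¹ with ht_def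
  have h2 : 3 * t = 1 := by
    have h3 : IsUnit (3 : ZMod (2 ^ m)) := by
      have := (ZMod.isUnit_iff_coprime 3 (2 ^ m)).mpr
        (Nat.Coprime.pow_right m (by decide))
      simpa using this
    simpa [ht_def] using ZMod.mul_inv_of_unit _ h3
  refine ⟨{
    toFun := fun v =>
      ((v.1.1 + v.1.2 * (t - t^2) + v.2.1 * t + v.2.2 * t,
        v.1.1 - v.1.2 * t^2 - 2 * v.2.1 * t - 2 * v.2.2 * t),
       (v.1.1 - v.1.2 * t^2 - v.2.1 * t * (d + 1) + v.2.2 * t * d,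
        v.1.1 * d - v.1.2 * t^2 * d + v.2.1 * t - v.2.2 * t * (d + 1)))
    invFun := fun v =>
      (((t - t^2) * (2*v.1.1 + v.1.2) - t^2 * (v.1.1 + 2*v.1.2)
          - t^2 * (2*v.2.1 + v.2.2) - t^2 * d * (v.2.1 + 2*v.2.2),
        (2*v.1.1 + v.1.2) + (v.1.1 + 2*v.1.2) + (2*v.2.1 + v.2.2)
          + d * (v.2.1 + 2*v.2.2)),
       (t * (2*v.1.1 + v.1.2) - 2 * t * (v.1.1 + 2*v.1.2)
          + t * d * (2*v.2.1 + v.2.2) - t * (d + 1) * (v.2.1 + 2*v.2.2),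
        t * (2*v.1.1 + v.1.2) - 2 * t * (v.1.1 + 2*v.1.2)
          - t * (d + 1) * (2*v.2.1 + v.2.2) + t * (v.2.1 + 2*v.2.2)))
    left_inv := by
      rintro ⟨⟨x, y⟩, ⟨z, w⟩⟩
      dsimp only
      simp only [Prod.mk.injEq]
      refine ⟨⟨?_, ?_⟩, ?_, ?_⟩
      · linear_combination (w*t^3 + z*t^3 + 2*y*t^4 - 2*x*t^2) * h1 + (-2*y*t^2 + x) * h2
      · linear_combination (-w*t - z*t - 2*y*t^2 + 2*x) * h1 + y * h2
      · linear_combination (2*w*t^2 - z*t^2 + y*t^3 - x*t) * h1 + (z + 3*z*t) * h2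
      · linear_combination (-w*t^2 + 2*z*t^2 + y*t^3 - x*t) * h1 + (w + 3*w*t) * h2
    right_inv := by
      rintro ⟨⟨x, y⟩, ⟨z, w⟩⟩
      dsimp only
      simp only [Prod.mk.injEq]
      refine ⟨⟨?_, ?_⟩, ?_, ?_⟩
      · linear_combination (-w*t - 2*w*d*t - 2*z*t - z*d*t - 4*y*t + x - 2*x*t) * h2
      · linear_combination (y + 2*y*t - 2*x*t) * h2
      · linear_combination (-3*z*t^2) * h1 + (z + 3*z*t - y*t - 2*x*t) * h2
      · linear_combination (-3*w*t^2) * h1 + (w + 3*w*t - y*d*t - 2*x*d*t) * h2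
    map_add' := by
      rintro ⟨⟨x, y⟩, ⟨z, w⟩⟩ ⟨⟨x', y'⟩, ⟨z', w'⟩⟩
      dsimp only
      simp only [Prod.mk.injEq, Prod.mk_add_mk]
      refine ⟨⟨?_, ?_⟩, ?_, ?_⟩ <;> ring }, ?_⟩
  rintro ⟨⟨x, y⟩, ⟨z, w⟩⟩
  simp only [AddEquiv.coe_mk, Equiv.coe_fn_mk]
  rw [← pow_add, ← pow_add, pow_eq_pow_iff_modEq, ← hζ.eq_orderOf, ← ZMod.natCast_eq_natCast_iff]
  push_cast [ZMod.natCast_val, ZMod.cast_id]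
  linear_combination (w^2*t^2 - z*w*t^2 + z^2*t^2 + y*w*t^3 + y*z*t^3 + y^2*t^4
      - x*w*t - x*z*t - 2*x*y*t^2 + x^2) * h1
    + (z*w + 3*z*w*t - y^2*t^2 + x*y) * h2
end
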